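/- For n ≥ 1 let r_n = 1/(4n(n+1)) and let B_n = {(x,y) ∈ ℝ² : ((x)² + (y − 1/n)²)^(1/2) < r_n} be the open disc of radius r_n centered at (0, 1/n). Define f : ℝ² → ℝ by: f(x,y) = 0 if y ≥ 0 and (x,y) ∉ ⋃_{n≥1} B_n; f(x,y) = 1/y if y < 0; and f(x,y) = n + tan((π/(2 r_n)) · ((x)² + (y − 1/n)²)^(1/2)) if (x,y) ∈ B_n. Then the graph of f, {(p, f p) : p ∈ ℝ²}, is locally connected as a subspace of ℝ² × ℝ. -/

import Mathlib

set_option maxHeartbeats 1600000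

open Set Topology Real

/-- The radius `r n = 1/(4n(n+1))`. -/
noncomputable def exRadius (n : ℕ) : ℝ := 1 / (4 * n * (n + 1))

/-- The open disc `B n` of radius `r n` centered at `(0, 1/n)`. -/
def exDisc (n : ℕ) : Set (ℝ × ℝ) :=
  {p : ℝ × ℝ | Real.sqrt (p.1 ^ 2 + (p.2 - 1 / n) ^ 2) < exRadius n}

lemma exRadius_pos {n : ℕ} (hn : 1 ≤ n) : 0 < exRadius n := by
  have : (0:ℝ) < n := by exact_mod_cast hn
  unfold exRadius; positivity

lemma exRadius_le {n : ℕ} (hn : 1 ≤ n) : exRadius n ≤ 1 / (8 * n) := by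
  have h : (1:ℝ) ≤ n := by exact_mod_cast hn
  unfold exRadius
  rw [div_le_div_iff₀ (by positivity) (by positivity)]
  nlinarith

lemma mem_exDisc_iff {n : ℕ} (hn : 1 ≤ n) {p : ℝ × ℝ} :
    p ∈ exDisc n ↔ p.1 ^ 2 + (p.2 - 1 / n) ^ 2 < (exRadius n) ^ 2 := by
  unfold exDisc
  rw [mem_setOf_eq, Real.sqrt_lt' (exRadius_pos hn)]

lemma exDisc_y {n : ℕ} (hn : 1 ≤ n) {p : ℝ × ℝ} (hp : p ∈ exDisc n) :
    7 / (8 * n) < p.2 ∧ p.2 < 9 / (8 * n) := by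
  rw [mem_exDisc_iff hn] at hp
  have hr := exRadius_le hn
  have hrp := exRadius_pos hn
  have hn' : (1:ℝ) ≤ n := by exact_mod_cast hn
  have h1 : |p.2 - 1 / n| < exRadius n := by
    nlinarith [sq_nonneg p.1, abs_nonneg (p.2 - 1/(n:ℝ)), sq_abs (p.2 - 1/(n:ℝ))]
  have h2 := abs_lt.mp h1
  have hn0 : (0:ℝ) < n := by linarith
  have h8 : (1:ℝ)/n - 1/(8*n) = 7/(8*n) := by field_simp; ring
  have h9 : (1:ℝ)/n + 1/(8*n) = 9/(8*n) := by field_simp; ring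
  constructor
  · linarith [h2.1]
  · linarith [h2.2]

lemma exDisc_x {n : ℕ} (hn : 1 ≤ n) {p : ℝ × ℝ} (hp : p ∈ exDisc n) :
    |p.1| < exRadius n := by
  rw [mem_exDisc_iff hn] at hp
  have hrp := exRadius_pos hn
  nlinarith [sq_nonneg (p.2 - 1/(n:ℝ)), abs_nonneg p.1, sq_abs p.1]

lemma sqrt_tri (a b c d : ℝ) :
    Real.sqrt ((a + c) ^ 2 + (b + d) ^ 2) ≤ Real.sqrt (a ^ 2 + b ^ 2) + Real.sqrt (c ^ 2 + d ^ 2) := by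
  have h := norm_add_le (⟨a, b⟩ : ℂ) ⟨c, d⟩
  simpa [Complex.norm_def, Complex.normSq_apply, Complex.add_re, Complex.add_im, pow_two] using h

lemma sqrt_le_abs_add (x y : ℝ) : Real.sqrt (x ^ 2 + y ^ 2) ≤ |x| + |y| := by
  rw [← Real.sqrt_sq (by positivity : (0:ℝ) ≤ |x| + |y|)]
  apply Real.sqrt_le_sqrt
  have := sq_abs x; have := sq_abs y
  nlinarith [abs_nonneg x, abs_nonneg y]

lemma isOpen_exDisc (n : ℕ) : IsOpen (exDisc n) := by
  have : exDisc n = (fun p : ℝ × ℝ => Real.sqrt (p.1 ^ 2 + (p.2 - 1 / n) ^ 2)) ⁻¹' (Iio (exRadius n)) := rfl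
  rw [this]
  exact (Real.continuous_sqrt.comp (by fun_prop)).isOpen_preimage _ isOpen_Iio

lemma convex_exDisc {n : ℕ} (hn : 1 ≤ n) : Convex ℝ (exDisc n) := by
  intro x hx y hy a b ha hb hab
  rw [mem_exDisc_iff hn] at hx hy ⊢
  simp only [Prod.fst_add, Prod.snd_add, Prod.smul_fst, Prod.smul_snd, smul_eq_mul]
  have hb1 : b = 1 - a := by linarith
  subst hb1
  nlinarith [mul_nonneg (mul_nonneg ha hb) (sq_nonneg (x.1 - y.1)),
    mul_nonneg (mul_nonneg ha hb) (sq_nonneg (x.2 - y.2)),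
    mul_le_mul_of_nonneg_left hx.le ha, mul_le_mul_of_nonneg_left hy.le hb]

lemma disc_small {n : ℕ} (hn : 1 ≤ n) {q : ℝ × ℝ} (hq : q ∈ exDisc n) {δ : ℝ}
    (hδ : δ ≤ 1) (hq2 : q.2 < δ) : exRadius n < δ / 2 ∧ |q.1| < δ / 2 := by
  have h7 := (exDisc_y hn hq).1
  have hn' : (1:ℝ) ≤ n := by exact_mod_cast hn
  have hn0 : (0:ℝ) < n := by linarith
  have hδ0 : 0 < δ := lt_of_le_of_lt (by positivity : (0:ℝ) ≤ 7/(8*(n:ℝ))) (lt_trans h7 hq2)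
  have h7' : 7 < 8 * (n:ℝ) * δ := by
    rw [div_lt_iff₀ (by positivity)] at h7
    nlinarith
  have hr : exRadius n < δ / 2 := by
    have h1 : exRadius n ≤ 1/(8*(n:ℝ)) := exRadius_le hn
    have h2 : 1/(8*(n:ℝ)) < δ/7 := by
      rw [div_lt_div_iff₀ (by positivity) (by norm_num)]
      nlinarith
    linarith
  exact ⟨hr, lt_trans (exDisc_x hn hq) (by linarith)⟩

lemma far_discs {p : ℝ × ℝ} (hp2 : 0 < p.2) (n₀ : ℕ)
    (hp : ∀ m : ℕ, 1 ≤ m → m ≠ n₀ → (exRadius m) ^ 2 < p.1 ^ 2 + (p.2 - 1 / m) ^ 2) :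
    ∃ ε > 0, ∀ q : ℝ × ℝ, |q.1 - p.1| < ε → |q.2 - p.2| < ε →
      ∀ m : ℕ, 1 ≤ m → m ≠ n₀ → q ∉ exDisc m := by
  set M : ℕ := ⌈9 / (4 * p.2)⌉₊ + 1 with hM
  have hM1 : 1 ≤ M := Nat.le_add_left 1 _
  have hne : (Finset.Icc 1 M).Nonempty := ⟨1, Finset.mem_Icc.mpr ⟨le_refl 1, hM1⟩⟩
  have hMge : 9 / (4 * p.2) ≤ (M : ℝ) := by
    rw [hM]; push_cast
    exact le_trans (Nat.le_ceil _) (by linarith)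
  set g : ℕ → ℝ := fun m => if m = n₀ then 1 else
      Real.sqrt (p.1 ^ 2 + (p.2 - 1 / m) ^ 2) - exRadius m with hg
  have hmargin : ∀ m ∈ Finset.Icc 1 M, 0 < g m := by
    intro m hm
    by_cases h : m = n₀
    · simp [hg, h]
    · simp only [hg, if_neg h]
      have hm1 : 1 ≤ m := (Finset.mem_Icc.mp hm).1
      have := hp m hm1 h
      have h1 : exRadius m < Real.sqrt (p.1 ^ 2 + (p.2 - 1 / m) ^ 2) := by
        rw [show exRadius m = Real.sqrt ((exRadius m)^2) from (Real.sqrt_sq (le_of_lt (exRadius_pos hm1))).symm]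
        exact Real.sqrt_lt_sqrt (sq_nonneg _) this
      linarith
  set ε := min (p.2 / 4) ((Finset.Icc 1 M).inf' hne g / 3) with hε
  have hεpos : 0 < ε := by
    apply lt_min (by linarith)
    have h0 : 0 < (Finset.Icc 1 M).inf' hne g := (Finset.lt_inf'_iff hne).mpr hmargin
    linarith
  refine ⟨ε, hεpos, ?_⟩
  intro q hq1 hq2 m hm1 hmn hq
  by_cases hcase : m ≤ M
  · have hmem : m ∈ Finset.Icc 1 M := Finset.mem_Icc.mpr ⟨hm1, hcase⟩
    have hinf : (Finset.Icc 1 M).inf' hne g ≤ g m := Finset.inf'_le g hmem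
    rw [hg] at hinf; simp only [if_neg hmn] at hinf
    have hεle : ε ≤ (Real.sqrt (p.1 ^ 2 + (p.2 - 1 / m) ^ 2) - exRadius m) / 3 :=
      le_trans (min_le_right _ _) (by linarith)
    have hd : Real.sqrt (q.1 ^ 2 + (q.2 - 1 / m) ^ 2) < exRadius m := hq
    have htri : Real.sqrt (p.1 ^ 2 + (p.2 - 1 / m) ^ 2) ≤
        Real.sqrt (q.1 ^ 2 + (q.2 - 1 / m) ^ 2) + Real.sqrt ((p.1 - q.1) ^ 2 + (p.2 - q.2) ^ 2) := by
      have := sqrt_tri q.1 (q.2 - 1 / m) (p.1 - q.1) (p.2 - q.2)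
      have he : (q.1 + (p.1 - q.1)) = p.1 := by ring
      have he2 : ((q.2 - 1/(m:ℝ)) + (p.2 - q.2)) = p.2 - 1/(m:ℝ) := by ring
      rwa [he, he2] at this
    have hsmall : Real.sqrt ((p.1 - q.1) ^ 2 + (p.2 - q.2) ^ 2) ≤ |p.1 - q.1| + |p.2 - q.2| :=
      sqrt_le_abs_add _ _
    rw [abs_sub_comm q.1 p.1] at hq1
    rw [abs_sub_comm q.2 p.2] at hq2
    have hr0 := exRadius_pos hm1
    linarith
  · have h9 := (exDisc_y hm1 hq).2
    have hm' : (M:ℝ) < m := by exact_mod_cast Nat.lt_of_not_le (by omega)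
    have hlow : 9 / (8 * (m:ℝ)) < p.2 / 2 := by
      have h1 : 9 / (4 * p.2) < (m:ℝ) := lt_of_le_of_lt hMge hm'
      rw [div_lt_div_iff₀ (by positivity) (by norm_num)]
      rw [div_lt_iff₀ (by positivity)] at h1
      nlinarith
    have h2 : |q.2 - p.2| < p.2 / 4 := lt_of_lt_of_le hq2 (min_le_left _ _)
    have := abs_lt.mp h2
    linarith

lemma dist_coords {q p : ℝ × ℝ} {r : ℝ} (h : dist q p < r) :
    |q.1 - p.1| < r ∧ |q.2 - p.2| < r := by
  rw [Prod.dist_eq, sup_lt_iff, Real.dist_eq, Real.dist_eq] at h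
  exact h

lemma dist_coords' {q p : ℝ × ℝ} {r : ℝ} (h1 : |q.1 - p.1| < r) (h2 : |q.2 - p.2| < r) :
    dist q p < r := by
  rw [Prod.dist_eq, sup_lt_iff, Real.dist_eq, Real.dist_eq]
  exact ⟨h1, h2⟩

lemma far_discs_axis {p : ℝ × ℝ} (hp1 : p.1 ≠ 0) (hp2 : p.2 = 0) :
    ∃ ε > 0, ∀ q : ℝ × ℝ, |q.1 - p.1| < ε → |q.2 - p.2| < ε →
      ∀ m : ℕ, 1 ≤ m → q ∉ exDisc m := by
  refine ⟨|p.1| / 4, by positivity, ?_⟩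
  intro q hq1 hq2 m hm1 hq
  have hx := exDisc_x hm1 hq
  have hy := (exDisc_y hm1 hq).1
  have hm' : (1:ℝ) ≤ m := by exact_mod_cast hm1
  have hm0 : (0:ℝ) < m := by linarith
  have hr : exRadius m ≤ 1 / (8 * m) := exRadius_le hm1
  -- |p.1| ≤ |q.1| + |q.1 - p.1| < r_m + |p.1|/4
  have h1 : |p.1| < exRadius m + |p.1| / 4 := by
    have := abs_sub_abs_le_abs_sub p.1 q.1
    rw [abs_sub_comm p.1 q.1] at this
    linarith [abs_lt.mp hq1, abs_abs p.1, le_abs_self p.1, neg_abs_le p.1,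
      (abs_sub_abs_le_abs_sub p.1 q.1)]
  have h2 : (3:ℝ)/4 * |p.1| < exRadius m := by linarith
  have h3 : (3:ℝ)/4 * |p.1| < 1 / (8 * m) := lt_of_lt_of_le h2 hr
  -- then 7/(8m) > (7·3/4·... ) : 1/(8m) > (3/4)|p1| ⇒ 7/(8m) > (21/4)|p1|
  have h4 : (21:ℝ)/4 * |p.1| < 7 / (8 * m) := by
    rw [lt_div_iff₀ (by positivity)] at h3 ⊢
    nlinarith
  have h5 : q.2 > (21:ℝ)/4 * |p.1| := lt_trans h4 hy
  rw [hp2] at hq2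
  have h6 := (abs_lt.mp hq2).2
  have : (0:ℝ) < |p.1| := abs_pos.mpr hp1
  linarith


lemma away_notin {n : ℕ} (hn : 1 ≤ n) {q z : ℝ × ℝ} (hq : q ∉ exDisc n)
    (hz2 : z.2 = q.2) (hz1 : q.1 ^ 2 ≤ z.1 ^ 2) : z ∉ exDisc n := by
  rw [mem_exDisc_iff hn] at hq ⊢
  push_neg at hq ⊢
  rw [hz2]
  linarith

lemma joinedIn_of_segment {x y : ℝ × ℝ} {s : Set (ℝ × ℝ)} (h : segment ℝ x y ⊆ s) :
    JoinedIn s x y := JoinedIn.of_segment_subset h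

def originNbhd (δ : ℝ) : Set (ℝ × ℝ) :=
  {q : ℝ × ℝ | |q.1| < δ ∧ 0 ≤ q.2 ∧ q.2 < δ ∧ ∀ n : ℕ, 1 ≤ n → q ∉ exDisc n}

lemma xaxis_notin {s : ℝ} {n : ℕ} (hn : 1 ≤ n) : ((s, (0:ℝ)) : ℝ × ℝ) ∉ exDisc n := by
  intro h
  have h1 := (exDisc_y hn h).1
  have hn' : (0:ℝ) < n := by exact_mod_cast hn
  simp only at h1
  have : (0:ℝ) < 7 / (8 * (n:ℝ)) := by positivity
  linarith

lemma chain {δ x y X : ℝ} (hδ0 : 0 < δ) (hδ1 : δ ≤ 1)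
    (hz : ((x, y) : ℝ × ℝ) ∈ originNbhd δ) (hX1 : |X| < δ) (hX2 : δ / 2 ≤ |X|)
    (hsq : ∀ a b : ℝ, 0 ≤ a → 0 ≤ b → a + b = 1 →
      x ^ 2 ≤ (a * x + b * X) ^ 2 ∧ |a * x + b * X| < δ) :
    JoinedIn (originNbhd δ) (x, y) (0, 0) := by
  obtain ⟨hx, hy0, hyδ, hd⟩ := hz
  simp only at hx hy0 hyδ hd
  have J1 : JoinedIn (originNbhd δ) (x, y) (X, y) := by
    apply joinedIn_of_segment
    rintro w ⟨a, b, ha, hb, hab, rfl⟩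
    have hw : a • ((x, y) : ℝ × ℝ) + b • ((X, y) : ℝ × ℝ) = (a * x + b * X, y) := by
      have : a * y + b * y = y := by rw [← add_mul, hab, one_mul]
      simp [Prod.ext_iff, Prod.smul_fst, Prod.smul_snd, smul_eq_mul, this]
    rw [hw]
    obtain ⟨hs1, hs2⟩ := hsq a b ha hb hab
    refine ⟨hs2, hy0, hyδ, fun n hn => ?_⟩
    exact away_notin hn (hd n hn) rfl hs1
  have J2 : JoinedIn (originNbhd δ) (X, y) (X, 0) := by
    apply joinedIn_of_segment
    rintro w ⟨a, b, ha, hb, hab, rfl⟩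
    have hw : a • ((X, y) : ℝ × ℝ) + b • ((X, 0) : ℝ × ℝ) = (X, a * y) := by
      have : a * X + b * X = X := by rw [← add_mul, hab, one_mul]
      simp [Prod.ext_iff, Prod.smul_fst, Prod.smul_snd, smul_eq_mul, this]
    rw [hw]
    have ha1 : a ≤ 1 := by linarith
    have hay0 : 0 ≤ a * y := mul_nonneg ha hy0
    have hayδ : a * y < δ := lt_of_le_of_lt (by nlinarith) hyδ
    refine ⟨hX1, hay0, hayδ, fun n hn hmem => ?_⟩
    have := (disc_small hn hmem hδ1 hayδ).2
    simp only at this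
    linarith
  have J3 : JoinedIn (originNbhd δ) (X, 0) (0, 0) := by
    apply joinedIn_of_segment
    rintro w ⟨a, b, ha, hb, hab, rfl⟩
    have hw : a • ((X, 0) : ℝ × ℝ) + b • ((0, 0) : ℝ × ℝ) = (a * X, 0) := by
      simp [Prod.ext_iff, Prod.smul_fst, Prod.smul_snd, smul_eq_mul]
    rw [hw]
    have ha1 : a ≤ 1 := by linarith
    have : |a * X| < δ := by
      rw [abs_mul, abs_of_nonneg ha]
      calc a * |X| ≤ 1 * |X| := by nlinarith [abs_nonneg X]
      _ < δ := by rw [one_mul]; exact hX1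
    exact ⟨this, le_refl 0, hδ0, fun n hn => xaxis_notin hn⟩
  exact (J1.trans J2).trans J3

lemma origin_preconnected {δ : ℝ} (hδ0 : 0 < δ) (hδ1 : δ ≤ 1) :
    IsPreconnected (originNbhd δ) := by
  have h0 : ((0:ℝ), (0:ℝ)) ∈ originNbhd δ := by
    refine ⟨by simpa using hδ0, le_refl 0, hδ0, fun n hn => xaxis_notin hn⟩
  have hpath : IsPathConnected (originNbhd δ) := by
    refine ⟨(0, 0), h0, ?_⟩
    intro z hz
    obtain ⟨x, y⟩ := z
    obtain ⟨hx, hy0, hyδ, hd⟩ := hz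
    simp only at hx hy0 hyδ hd
    have hz' : ((x, y) : ℝ × ℝ) ∈ originNbhd δ := ⟨hx, hy0, hyδ, hd⟩
    refine JoinedIn.symm ?_
    rcases le_or_gt 0 x with hx0 | hx0
    · set X : ℝ := max x (δ / 2) with hX
      have hXnn : 0 ≤ X := le_trans (by linarith) (le_max_right _ _)
      have habs : |X| = X := abs_of_nonneg hXnn
      refine chain (X := X) hδ0 hδ1 hz' ?_ ?_ ?_
      · rw [habs]; exact max_lt (lt_of_abs_lt hx) (by linarith)
      · rw [habs]; exact le_max_right _ _
      · intro a b ha hb hab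
        have h1 : x ≤ a * x + b * X := by nlinarith [le_max_left x (δ/2)]
        have h2 : a * x + b * X ≤ X := by nlinarith [le_max_left x (δ/2)]
        have h3 : X < δ := max_lt (lt_of_abs_lt hx) (by linarith)
        constructor
        · nlinarith
        · rw [abs_lt]; constructor <;> nlinarith
    · set X : ℝ := min x (-(δ / 2)) with hX
      have hXnp : X ≤ -(δ/2) := min_le_right _ _
      have hXn : X ≤ 0 := by linarith
      have habs : |X| = -X := abs_of_nonpos hXn
      have hxX : X ≤ x := min_le_left _ _
      have hXgt : -δ < X := by
        apply lt_min
        · linarith [(abs_lt.mp hx).1]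
        · linarith
      refine chain (X := X) hδ0 hδ1 hz' ?_ ?_ ?_
      · rw [habs]; linarith
      · rw [habs]; linarith
      · intro a b ha hb hab
        have h1 : X ≤ a * x + b * X := by nlinarith
        have h2 : a * x + b * X ≤ x := by nlinarith
        constructor
        · nlinarith
        · rw [abs_lt]; constructor <;> nlinarith
  exact hpath.isConnected.isPreconnected

noncomputable def kap (q : ℝ × ℝ) : ℂ := (q.1 : ℂ) + (q.2 : ℂ) * Complex.I

lemma kap_re (q : ℝ × ℝ) : (kap q).re = q.1 := by simp [kap]
lemma kap_im (q : ℝ × ℝ) : (kap q).im = q.2 := by simp [kap]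
lemma kap_cont : Continuous kap := by unfold kap; fun_prop

lemma abs_kap_sub (q : ℝ × ℝ) (c : ℝ) :
    ‖kap q - (c : ℂ) * Complex.I‖ = Real.sqrt (q.1 ^ 2 + (q.2 - c) ^ 2) := by
  rw [Complex.norm_def, Complex.normSq_apply]
  simp [kap]
  ring_nf

lemma frac_ineq {a b : ℝ} (ha : 1 ≤ a) (hb : a + 1 ≤ b) :
    1/(4*a*(a+1)) + 1/(4*b*(b+1)) < 1/a - 1/b := by
  have ha0 : 0 < a := by linarith
  have hb0 : 0 < b := by linarith
  rw [div_add_div _ _ (by positivity) (by positivity),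
    div_sub_div _ _ (by positivity) (by positivity),
    div_lt_div_iff₀ (by positivity) (by positivity)]
  nlinarith [mul_pos ha0 hb0, sq_nonneg (b - a), mul_nonneg (mul_nonneg ha0.le hb0.le) (sub_nonneg.mpr hb), mul_pos (mul_pos ha0 hb0) hb0, mul_pos (mul_pos ha0 ha0) hb0]

-- circles of distinct discs are strictly separated
lemma circle_sep {n m : ℕ} (hn : 1 ≤ n) (hm : 1 ≤ m) (hnm : m ≠ n) {p : ℝ × ℝ}
    (hp : p.1 ^ 2 + (p.2 - 1 / n) ^ 2 = (exRadius n) ^ 2) :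
    (exRadius m) ^ 2 < p.1 ^ 2 + (p.2 - 1 / m) ^ 2 := by
  have hrn := exRadius_pos hn
  have hrm := exRadius_pos hm
  have ha : (1:ℝ) ≤ n := by exact_mod_cast hn
  have hb : (1:ℝ) ≤ m := by exact_mod_cast hm
  have hdm0 : (0:ℝ) ≤ Real.sqrt (p.1 ^ 2 + (p.2 - 1 / m) ^ 2) := Real.sqrt_nonneg _
  -- triangle: |1/n - 1/m| ≤ d_m + r_n
  have htri : |1 / (n:ℝ) - 1 / m| ≤ Real.sqrt (p.1 ^ 2 + (p.2 - 1 / m) ^ 2) + exRadius n := by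
    have h := sqrt_tri p.1 (p.2 - 1/m) (-p.1) (-(p.2 - 1/n))
    have e1 : p.1 + -p.1 = 0 := by ring
    have e2 : (p.2 - 1/(m:ℝ)) + -(p.2 - 1/(n:ℝ)) = 1/(n:ℝ) - 1/m := by ring
    rw [e1, e2] at h
    have e3 : Real.sqrt ((0:ℝ)^2 + (1/(n:ℝ) - 1/m)^2) = |1/(n:ℝ) - 1/m| := by
      rw [show (0:ℝ)^2 + (1/(n:ℝ) - 1/m)^2 = (1/(n:ℝ) - 1/m)^2 by ring, Real.sqrt_sq_eq_abs]
    have e4 : Real.sqrt ((-p.1)^2 + (-(p.2 - 1/(n:ℝ)))^2) = exRadius n := by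
      rw [show (-p.1)^2 + (-(p.2 - 1/(n:ℝ)))^2 = p.1^2 + (p.2 - 1/(n:ℝ))^2 by ring, hp,
        Real.sqrt_sq hrn.le]
    rw [e3, e4] at h
    exact h
  have hnum : exRadius m + exRadius n < |1/(n:ℝ) - 1/m| := by
    unfold exRadius
    push_cast
    rcases lt_or_gt_of_ne hnm with h | h
    · have hmn : (m:ℝ) + 1 ≤ n := by exact_mod_cast Nat.succ_le_of_lt h
      have habs : |1/(n:ℝ) - 1/m| = 1/(m:ℝ) - 1/n := by
        rw [abs_of_nonpos (by rw [sub_nonpos]; exact one_div_le_one_div_of_le (by linarith) (by linarith))]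
        ring
      rw [habs]
      have := frac_ineq hb hmn
      linarith
    · have hmn : (n:ℝ) + 1 ≤ m := by exact_mod_cast Nat.succ_le_of_lt h
      have habs : |1/(n:ℝ) - 1/m| = 1/(n:ℝ) - 1/m := by
        rw [abs_of_nonneg (by rw [sub_nonneg]; exact one_div_le_one_div_of_le (by linarith) (by linarith))]
      rw [habs]
      have := frac_ineq ha hmn
      linarith
  have hdm : exRadius m < Real.sqrt (p.1 ^ 2 + (p.2 - 1 / m) ^ 2) := by linarith
  have hsq : Real.sqrt (p.1 ^ 2 + (p.2 - 1 / m) ^ 2) ^ 2 = p.1 ^ 2 + (p.2 - 1 / m) ^ 2 :=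
    Real.sq_sqrt (by positivity)
  nlinarith [hdm, hrm, hdm0]

lemma boundary_nbhd {p : ℝ × ℝ} {n : ℕ} (hn : 1 ≤ n)
    (hcirc : p.1 ^ 2 + (p.2 - 1 / n) ^ 2 = (exRadius n) ^ 2)
    (hnotin : ∀ m : ℕ, 1 ≤ m → p ∉ exDisc m) {ε : ℝ} (hε : 0 < ε) :
    ∃ (N : Set (ℝ × ℝ)) (ρ : ℝ), 0 < ρ ∧ ρ ≤ 1 ∧ IsPreconnected N ∧
      (∀ q ∈ N, 0 ≤ q.2 ∧ ∀ m : ℕ, 1 ≤ m → q ∉ exDisc m) ∧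
      (∀ q ∈ N, dist q p < ε) ∧
      (∀ q : ℝ × ℝ, dist q p < ρ → 0 ≤ q.2 → (∀ m : ℕ, 1 ≤ m → q ∉ exDisc m) → q ∈ N) := by
  set r := exRadius n with hrdef
  clear_value r
  have hr : 0 < r := by rw [hrdef]; exact exRadius_pos hn
  have hn' : (1:ℝ) ≤ n := by exact_mod_cast hn
  have hrle : r ≤ 1/8 := by
    have h1 : r ≤ 1/(8*(n:ℝ)) := by rw [hrdef]; exact exRadius_le hn
    have : 1/(8*(n:ℝ)) ≤ 1/8 := one_div_le_one_div_of_le (by norm_num) (by linarith)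
    linarith
  -- p.2 > 0
  have hp2 : 0 < p.2 := by
    have h1 : (p.2 - 1/(n:ℝ))^2 ≤ r^2 := by nlinarith [sq_nonneg p.1]
    have h2 : |p.2 - 1/(n:ℝ)| ≤ r := by
      rw [← Real.sqrt_sq_eq_abs, ← Real.sqrt_sq hr.le]
      exact Real.sqrt_le_sqrt h1
    have h3 := (abs_le.mp h2).1
    have h4 : r ≤ 1/(8*(n:ℝ)) := by rw [hrdef]; exact exRadius_le hn
    have h5 : 1/(8*(n:ℝ)) < 1/(n:ℝ) := by
      apply div_lt_div_of_pos_left one_pos (by linarith)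
      nlinarith
    linarith
  have hcirc' : p.1 ^ 2 + (p.2 - 1 / n) ^ 2 = (exRadius n) ^ 2 := by rw [← hrdef]; exact hcirc
  obtain ⟨ε₂, hε₂, hfar⟩ := far_discs hp2 n (fun m hm hmn => circle_sep hn hm hmn hcirc')
  set ε' := min (min ε p.2) (min 1 ε₂) with hε'def
  have hε'pos : 0 < ε' := by
    apply lt_min (lt_min hε hp2) (lt_min one_pos hε₂)
  have hε'ε : ε' ≤ ε := le_trans (min_le_left _ _) (min_le_left _ _)
  have hε'p2 : ε' ≤ p.2 := le_trans (min_le_left _ _) (min_le_right _ _)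
  have hε'1 : ε' ≤ 1 := le_trans (min_le_right _ _) (min_le_left _ _)
  have hε'2 : ε' ≤ ε₂ := le_trans (min_le_right _ _) (min_le_right _ _)
  set δ := ε'/2 with hδdef
  set α := ε'/16 with hαdef
  clear_value δ α
  clear_value ε'
  have hδ0 : 0 < δ := by rw [hδdef]; linarith
  have hα0 : 0 < α := by rw [hαdef]; linarith
  have hα1 : α ≤ 1 := by rw [hαdef]; linarith
  set c : ℂ := ((1/(n:ℝ) : ℝ) : ℂ) * Complex.I with hcdef
  set w : ℂ := kap p - c with hwdef
  have habsw : ‖w‖ = r := by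
    rw [hwdef, hcdef, abs_kap_sub p (1/(n:ℝ)), hcirc, Real.sqrt_sq hr.le]
  have hw0 : w ≠ 0 := by
    intro h
    rw [h] at habsw
    simp at habsw
    linarith
  set φ : ℝ × ℝ → ℂ := fun s =>
    c + (((r + s.1)/r : ℝ) : ℂ) * Complex.exp ((s.2 : ℂ) * Complex.I) * w with hφdef
  set ψ : ℝ × ℝ → ℝ × ℝ := fun s => ((φ s).re, (φ s).im) with hψdef
  set K : Set (ℝ × ℝ) := Icc (0:ℝ) δ ×ˢ Icc (-α) α with hKdef
  have hkapψ : ∀ s, kap (ψ s) = φ s := by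
    intro s
    rw [hψdef]
    simp only [kap]
    exact Complex.re_add_im (φ s)
  -- the key bound
  have hbnd : ∀ s ∈ K, ‖φ s - kap p‖ < ε' := by
    rintro ⟨t, θ⟩ ⟨⟨ht0, htδ⟩, ⟨hθ1, hθ2⟩⟩
    have hθabs : |θ| ≤ α := abs_le.mpr ⟨hθ1, hθ2⟩
    have hE : ‖Complex.exp ((θ:ℂ) * Complex.I) - 1‖ ≤ 2 * |θ| := by
      have h := Complex.norm_exp_sub_one_le (x := (θ:ℂ) * Complex.I) ?_
      · simpa using h
      · simpa using le_trans hθabs hα1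
    have hsplit : φ (t, θ) - kap p =
        ((((r + t)/r : ℝ) : ℂ) * (Complex.exp ((θ:ℂ) * Complex.I) - 1) + (((t/r : ℝ)) : ℂ)) * w := by
      rw [hφdef]
      have hkp : kap p = c + w := by rw [hwdef]; ring
      rw [hkp]
      push_cast
      have hrne : (r:ℂ) ≠ 0 := by exact_mod_cast hr.ne'
      field_simp
      ring
    rw [hsplit, norm_mul, habsw]
    have h1 : ‖(((r + t)/r : ℝ) : ℂ) * (Complex.exp ((θ:ℂ) * Complex.I) - 1) + (((t/r : ℝ)) : ℂ)‖
        ≤ (r + t)/r * (2 * |θ|) + t/r := by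
      calc ‖_‖ ≤ ‖(((r + t)/r : ℝ) : ℂ) * (Complex.exp ((θ:ℂ) * Complex.I) - 1)‖
            + ‖(((t/r : ℝ)) : ℂ)‖ := norm_add_le _ _
        _ ≤ (r + t)/r * (2 * |θ|) + t/r := by
            rw [norm_mul, Complex.norm_real, Complex.norm_real, Real.norm_eq_abs, Real.norm_eq_abs]
            have e1 : |(r+t)/r| = (r+t)/r := abs_of_nonneg (by positivity)
            have e2 : |t/r| = t/r := abs_of_nonneg (by positivity)
            rw [e1, e2]
            have := mul_le_mul_of_nonneg_left hE (by positivity : (0:ℝ) ≤ (r+t)/r)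
            linarith
    have h2 : ((r + t)/r * (2 * |θ|) + t/r) * r = (r + t) * (2 * |θ|) + t := by
      field_simp
    have h3 : (r + t) * (2 * |θ|) + t ≤ (1 + δ) * (2 * α) + δ := by
      have : r + t ≤ 1 + δ := by linarith [hrle]
      have h2θ : 2 * |θ| ≤ 2 * α := by linarith
      nlinarith [abs_nonneg θ, hα0.le, this]
    have h4 : (1 + δ) * (2 * α) + δ < ε' := by
      have e1 : δ = ε'/2 := hδdef
      have e2 : α = ε'/16 := hαdef
      rw [e1, e2]
      nlinarith [hε'pos, hε'1, mul_le_of_le_one_right hε'pos.le hε'1]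
    have h5 := mul_le_mul_of_nonneg_right h1 hr.le
    rw [h2] at h5
    linarith
  have hψclose : ∀ s ∈ K, dist (ψ s) p < ε' := by
    intro s hs
    have h := hbnd s hs
    apply dist_coords'
    · have : |(φ s - kap p).re| ≤ ‖φ s - kap p‖ := Complex.abs_re_le_norm _
      rw [Complex.sub_re, kap_re] at this
      exact lt_of_le_of_lt this h
    · have : |(φ s - kap p).im| ≤ ‖φ s - kap p‖ := Complex.abs_im_le_norm _
      rw [Complex.sub_im, kap_im] at this
      exact lt_of_le_of_lt this h
  -- radius of points of N
  have hrad : ∀ s : ℝ × ℝ, s.1 ≥ 0 → ‖kap (ψ s) - c‖ = r + s.1 := by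
    rintro ⟨t, θ⟩ ht0
    rw [hkapψ, hφdef]
    simp only [add_sub_cancel_left]
    rw [norm_mul, norm_mul, habsw, Complex.norm_real, Real.norm_eq_abs, Complex.norm_exp_ofReal_mul_I]
    rw [abs_of_nonneg (by positivity : (0:ℝ) ≤ (r + t)/r)]
    field_simp
  -- continuity of the angle function
  have hargcont : ∃ ρarg > 0, ∀ q : ℝ × ℝ, dist q p < ρarg →
      |Complex.arg ((kap q - c) / w)| < α := by
    have hc1 : ContinuousAt (fun q : ℝ × ℝ => (kap q - c) / w) p :=
      ((kap_cont.sub continuous_const).continuousAt).div_const w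
    have hval : (kap p - c) / w = 1 := by rw [← hwdef, div_self hw0]
    have hc2 : ContinuousAt (fun q : ℝ × ℝ => Complex.arg ((kap q - c) / w)) p := by
      apply ContinuousAt.comp (g := Complex.arg) ?_ hc1
      rw [hval]
      exact Complex.continuousAt_arg (by simp [Complex.slitPlane])
    rw [Metric.continuousAt_iff] at hc2
    obtain ⟨ρarg, hρ0, hρ⟩ := hc2 α hα0
    refine ⟨ρarg, hρ0, fun q hq => ?_⟩
    have := hρ hq
    rw [Real.dist_eq, hval, Complex.arg_one, sub_zero] at this
    exact this
  obtain ⟨ρarg, hρarg0, hargsmall⟩ := hargcont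
  refine ⟨ψ '' K, min (δ/2) ρarg, lt_min (by positivity) hρarg0, ?_, ?_, ?_, ?_, ?_⟩
  · calc min (δ/2) ρarg ≤ δ/2 := min_le_left _ _
      _ ≤ 1 := by rw [hδdef]; linarith
  · apply IsPreconnected.image
    · exact ((convex_Icc _ _).prod (convex_Icc _ _)).isPreconnected
    · apply Continuous.continuousOn
      rw [hψdef]
      apply Continuous.prodMk
      · apply Complex.continuous_re.comp
        rw [hφdef]; fun_prop
      · apply Complex.continuous_im.comp
        rw [hφdef]; fun_prop
  · rintro q ⟨s, hs, rfl⟩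
    have hclose := hψclose s hs
    have hcoords := dist_coords hclose
    constructor
    · -- 0 ≤ q.2
      have := (abs_lt.mp hcoords.2).1
      linarith
    · intro m hm
      by_cases hmn : m = n
      · subst hmn
        intro hmem
        have h1 : Real.sqrt ((ψ s).1 ^ 2 + ((ψ s).2 - 1/(m:ℝ)) ^ 2) < exRadius m := hmem
        rw [← hrdef] at h1
        have h2 : ‖kap (ψ s) - c‖ = Real.sqrt ((ψ s).1 ^ 2 + ((ψ s).2 - 1/(m:ℝ)) ^ 2) := by
          rw [hcdef]; exact abs_kap_sub _ _
        have h3 := hrad s (hs.1.1)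
        rw [h3] at h2
        have := hs.1.1
        linarith [h2 ▸ h1]
      · exact hfar _ (lt_of_lt_of_le hcoords.1 hε'2) (lt_of_lt_of_le hcoords.2 hε'2) m hm hmn
  · rintro q ⟨s, hs, rfl⟩
    exact lt_of_lt_of_le (hψclose s hs) hε'ε
  · -- coverage
    intro q hdq hq2 hqd
    set z : ℂ := kap q - c with hzdef
    have hzr : r ≤ ‖z‖ := by
      by_contra hlt
      push_neg at hlt
      apply hqd n hn
      have habs' : ‖kap q - c‖ = Real.sqrt (q.1 ^ 2 + (q.2 - 1/(n:ℝ)) ^ 2) := by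
        rw [hcdef]; exact abs_kap_sub _ _
      show Real.sqrt (q.1 ^ 2 + (q.2 - 1/(n:ℝ)) ^ 2) < exRadius n
      rw [← hrdef, ← habs']
      exact hlt
    have hz0 : z ≠ 0 := by
      intro h
      rw [h] at hzr
      simp at hzr
      linarith
    set t := ‖z‖ - r with htdef
    have ht0 : 0 ≤ t := by linarith
    have htδ : t ≤ δ := by
      have hzw : z = (kap q - kap p) + w := by rw [hzdef, hwdef]; ring
      have h1 : ‖z‖ ≤ ‖kap q - kap p‖ + r := by
        rw [hzw]
        calc ‖_‖ ≤ ‖kap q - kap p‖ + ‖w‖ := norm_add_le _ _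
          _ = ‖kap q - kap p‖ + r := by rw [habsw]
      have h2 : ‖kap q - kap p‖ ≤ |(kap q - kap p).re| + |(kap q - kap p).im| :=
        Complex.norm_le_abs_re_add_abs_im _
      rw [Complex.sub_re, Complex.sub_im, kap_re, kap_re, kap_im, kap_im] at h2
      have hc := dist_coords hdq
      have hρδ : min (δ/2) ρarg ≤ δ/2 := min_le_left _ _
      have := hc.1; have := hc.2
      linarith
    set θ := Complex.arg (z / w) with hθdef
    have hθα : |θ| ≤ α := by
      have := hargsmall q (lt_of_lt_of_le hdq (min_le_right _ _))
      rw [hθdef, hzdef]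
      exact this.le
    refine ⟨(t, θ), ⟨⟨ht0, htδ⟩, ?_⟩, ?_⟩
    · exact ⟨(abs_le.mp hθα).1, (abs_le.mp hθα).2⟩
    · -- ψ (t, θ) = q
      have hφq : φ (t, θ) = kap q := by
        have hstart : φ (t, θ) = c + (((r + t)/r : ℝ) : ℂ) * Complex.exp ((θ:ℂ) * Complex.I) * w := rfl
        rw [hstart]
        have hA := Complex.norm_mul_exp_arg_mul_I (z / w)
        have habsdiv : ‖z / w‖ = ‖z‖ / r := by
          rw [norm_div, habsw]
        have hcoef : (r + t)/r = ‖z‖ / r := by rw [htdef]; ring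
        rw [hcoef]
        have hzabs0 : ‖z‖ ≠ 0 := by
          have := lt_of_lt_of_le hr hzr
          linarith [this]
        have hrne : (r:ℝ) ≠ 0 := hr.ne'
        -- exp (θ I) = (z/w) / (abs z / r : ℂ)
        have hne : ((‖z/w‖ : ℝ) : ℂ) ≠ 0 := by
          simp only [ne_eq, Complex.ofReal_eq_zero]
          rw [habsdiv]
          positivity
        have hexp : Complex.exp ((θ:ℂ) * Complex.I) = (z / w) / ((‖z‖ / r : ℝ) : ℂ) := by
          rw [hθdef, ← habsdiv, eq_div_iff hne, mul_comm]
          exact hA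
        have hne2 : ((‖z‖ / r : ℝ) : ℂ) ≠ 0 := by
          simp only [ne_eq, Complex.ofReal_eq_zero]
          positivity
        rw [hexp]
        have hmid : ((‖z‖ / r : ℝ) : ℂ) * ((z / w) / ((‖z‖ / r : ℝ) : ℂ)) * w = z := by
          field_simp [hw0, Complex.ofReal_ne_zero.mpr hzabs0, Complex.ofReal_ne_zero.mpr hrne]
        rw [hmid, hzdef]
        ring
      rw [hψdef]
      simp only
      rw [hφq, kap_re, kap_im]

section pieces
variable (f : ℝ × ℝ → ℝ)

/-- Graph piece over an open preconnected set where `f` is continuous. -/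
lemma graph_piece {s : Set (ℝ × ℝ)} {p : ℝ × ℝ} {ε : ℝ} (hs : IsOpen s)
    (hsc : IsPreconnected s) (hf : ContinuousOn f s) (hp : p ∈ s)
    (hb : ∀ q ∈ s, (q, f q) ∈ Metric.ball (p, f p) ε) :
    ∃ V O : Set ((ℝ × ℝ) × ℝ), IsPreconnected V ∧ V ⊆ range (fun q => (q, f q)) ∧
      V ⊆ Metric.ball (p, f p) ε ∧ IsOpen O ∧ (p, f p) ∈ O ∧
      range (fun q => (q, f q)) ∩ O ⊆ V := by
  refine ⟨(fun q => (q, f q)) '' s, s ×ˢ univ, ?_, ?_, ?_, ?_, ?_, ?_⟩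
  · exact hsc.image _ (continuousOn_id.prodMk hf)
  · rintro _ ⟨q, hq, rfl⟩; exact mem_range_self q
  · rintro _ ⟨q, hq, rfl⟩; exact hb q hq
  · exact hs.prod isOpen_univ
  · exact ⟨hp, mem_univ _⟩
  · rintro _ ⟨⟨q, rfl⟩, hq, -⟩; exact mem_image_of_mem _ hq

/-- Continuity of f at points of a disc. -/
lemma f_contAt_disc (hfB : ∀ n : ℕ, 1 ≤ n → ∀ p ∈ exDisc n,
      f p = n + Real.tan (π / (2 * exRadius n) *
        Real.sqrt (p.1 ^ 2 + (p.2 - 1 / n) ^ 2)))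
    {n : ℕ} (hn : 1 ≤ n) {q : ℝ × ℝ} (hq : q ∈ exDisc n) : ContinuousAt f q := by
  have hr := exRadius_pos hn
  set g : ℝ × ℝ → ℝ := fun q => (n : ℝ) + Real.tan (π / (2 * exRadius n) *
      Real.sqrt (q.1 ^ 2 + (q.2 - 1 / n) ^ 2)) with hgdef
  have hd : ContinuousAt (fun q : ℝ × ℝ => Real.sqrt (q.1 ^ 2 + (q.2 - 1 / n) ^ 2)) q :=
    (Real.continuous_sqrt.comp (by fun_prop)).continuousAt
  have hd0 : (0:ℝ) ≤ Real.sqrt (q.1 ^ 2 + (q.2 - 1 / n) ^ 2) := Real.sqrt_nonneg _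
  have hdlt : Real.sqrt (q.1 ^ 2 + (q.2 - 1 / n) ^ 2) < exRadius n := hq
  have harg : π / (2 * exRadius n) * Real.sqrt (q.1 ^ 2 + (q.2 - 1 / n) ^ 2) ∈
      Ioo (-(π/2)) (π/2) := by
    constructor
    · have : 0 ≤ π / (2 * exRadius n) * Real.sqrt (q.1 ^ 2 + (q.2 - 1 / n) ^ 2) := by
        apply mul_nonneg (by positivity) hd0
      linarith [Real.pi_pos]
    · calc π / (2 * exRadius n) * Real.sqrt (q.1 ^ 2 + (q.2 - 1 / n) ^ 2)
          < π / (2 * exRadius n) * exRadius n := by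
            apply mul_lt_mul_of_pos_left hdlt (by positivity)
      _ = π / 2 := by field_simp
  have hcos : Real.cos (π / (2 * exRadius n) * Real.sqrt (q.1 ^ 2 + (q.2 - 1 / n) ^ 2)) ≠ 0 :=
    ne_of_gt (Real.cos_pos_of_mem_Ioo harg)
  have htan : ContinuousAt Real.tan (π / (2 * exRadius n) *
      Real.sqrt (q.1 ^ 2 + (q.2 - 1 / n) ^ 2)) := Real.continuousAt_tan.mpr hcos
  have hg : ContinuousAt g q := by
    apply continuousAt_const.add
    have h2 : ContinuousAt (fun z : ℝ × ℝ => π / (2 * exRadius n) *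
        Real.sqrt (z.1 ^ 2 + (z.2 - 1 / n) ^ 2)) q := hd.const_mul _
    exact ContinuousAt.comp (x := q)
      (f := fun z : ℝ × ℝ => π / (2 * exRadius n) * Real.sqrt (z.1 ^ 2 + (z.2 - 1 / n) ^ 2))
      (g := Real.tan) htan h2
  apply hg.congr
  filter_upwards [(isOpen_exDisc n).mem_nhds hq] with z hz
  rw [hfB n hn z hz]

/-- On a disc, f ≥ n. -/
lemma f_ge_disc (hfB : ∀ n : ℕ, 1 ≤ n → ∀ p ∈ exDisc n,
      f p = n + Real.tan (π / (2 * exRadius n) *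
        Real.sqrt (p.1 ^ 2 + (p.2 - 1 / n) ^ 2)))
    {n : ℕ} (hn : 1 ≤ n) {q : ℝ × ℝ} (hq : q ∈ exDisc n) : (1:ℝ) ≤ f q := by
  have hr := exRadius_pos hn
  rw [hfB n hn q hq]
  have hd0 : (0:ℝ) ≤ Real.sqrt (q.1 ^ 2 + (q.2 - 1 / n) ^ 2) := Real.sqrt_nonneg _
  have hdlt : Real.sqrt (q.1 ^ 2 + (q.2 - 1 / n) ^ 2) < exRadius n := hq
  have hargnn : 0 ≤ π / (2 * exRadius n) * Real.sqrt (q.1 ^ 2 + (q.2 - 1 / n) ^ 2) :=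
    mul_nonneg (by positivity) hd0
  have harglt : π / (2 * exRadius n) * Real.sqrt (q.1 ^ 2 + (q.2 - 1 / n) ^ 2) < π / 2 := by
    calc π / (2 * exRadius n) * Real.sqrt (q.1 ^ 2 + (q.2 - 1 / n) ^ 2)
        < π / (2 * exRadius n) * exRadius n := mul_lt_mul_of_pos_left hdlt (by positivity)
    _ = π / 2 := by field_simp
  have htan : 0 ≤ Real.tan (π / (2 * exRadius n) * Real.sqrt (q.1 ^ 2 + (q.2 - 1 / n) ^ 2)) := by
    rw [Real.tan_eq_sin_div_cos]
    apply div_nonneg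
    · exact Real.sin_nonneg_of_nonneg_of_le_pi hargnn (by linarith [Real.pi_pos])
    · exact le_of_lt (Real.cos_pos_of_mem_Ioo ⟨by linarith [Real.pi_pos], harglt⟩)
  have : (1:ℝ) ≤ (n:ℝ) := by exact_mod_cast hn
  linarith


lemma f_contAt_neg (hfneg : ∀ p : ℝ × ℝ, p.2 < 0 → f p = 1 / p.2)
    {q : ℝ × ℝ} (hq : q.2 < 0) : ContinuousAt f q := by
  have hg : ContinuousAt (fun z : ℝ × ℝ => 1 / z.2) q :=
    ContinuousAt.div continuousAt_const continuousAt_snd (ne_of_lt hq)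
  apply hg.congr
  have hopen : IsOpen {z : ℝ × ℝ | z.2 < 0} := isOpen_lt continuous_snd continuous_const
  filter_upwards [hopen.mem_nhds hq] with z hz
  rw [hfneg z hz]

lemma convex_neg_half : Convex ℝ {q : ℝ × ℝ | q.2 < 0} := by
  intro x hx y hy a b ha hb hab
  simp only [mem_setOf_eq, Prod.snd_add, Prod.smul_snd, smul_eq_mul] at *
  rcases eq_or_lt_of_le ha with rfl | ha'
  · have hb1 : b = 1 := by linarith
    simpa [hb1] using hy
  · nlinarith


/-- Piece of the graph over a flat (f = 0) region. -/
lemma flat_piece (hf0 : ∀ p : ℝ × ℝ, 0 ≤ p.2 → (∀ n : ℕ, 1 ≤ n → p ∉ exDisc n) → f p = 0)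
    (hfneg : ∀ p : ℝ × ℝ, p.2 < 0 → f p = 1 / p.2)
    (hfB : ∀ n : ℕ, 1 ≤ n → ∀ p ∈ exDisc n,
      f p = n + Real.tan (π / (2 * exRadius n) *
        Real.sqrt (p.1 ^ 2 + (p.2 - 1 / n) ^ 2)))
    {p : ℝ × ℝ} (hpos : 0 ≤ p.2) (hnotin : ∀ n : ℕ, 1 ≤ n → p ∉ exDisc n)
    {N : Set (ℝ × ℝ)} {ρ ε : ℝ} (hε : 0 < ε) (hρ : 0 < ρ) (hρ1 : ρ ≤ 1)
    (hNpre : IsPreconnected N)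
    (hNZ : ∀ q ∈ N, 0 ≤ q.2 ∧ ∀ n : ℕ, 1 ≤ n → q ∉ exDisc n)
    (hNball : ∀ q ∈ N, dist q p < ε)
    (hcov : ∀ q : ℝ × ℝ, dist q p < ρ → 0 ≤ q.2 → (∀ n : ℕ, 1 ≤ n → q ∉ exDisc n) → q ∈ N) :
    ∃ V O : Set ((ℝ × ℝ) × ℝ), IsPreconnected V ∧ V ⊆ range (fun q => (q, f q)) ∧
      V ⊆ Metric.ball (p, f p) ε ∧ IsOpen O ∧ (p, f p) ∈ O ∧
      range (fun q => (q, f q)) ∩ O ⊆ V := by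
  have hfp : f p = 0 := hf0 p hpos hnotin
  have hfN : ∀ q ∈ N, f q = 0 := fun q hq => hf0 q (hNZ q hq).1 (hNZ q hq).2
  refine ⟨(fun q => (q, (0:ℝ))) '' N, Metric.ball p ρ ×ˢ Ioo (-1:ℝ) 1, ?_, ?_, ?_, ?_, ?_, ?_⟩
  · exact hNpre.image _ (continuousOn_id.prodMk continuousOn_const)
  · rintro _ ⟨q, hq, rfl⟩
    exact ⟨q, by simp [hfN q hq]⟩
  · rintro _ ⟨q, hq, rfl⟩
    rw [Metric.mem_ball, hfp, Prod.dist_eq]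
    simp only [dist_self]
    exact sup_lt_iff.mpr ⟨hNball q hq, hε⟩
  · exact Metric.isOpen_ball.prod isOpen_Ioo
  · exact ⟨Metric.mem_ball_self hρ, by rw [hfp]; constructor <;> norm_num⟩
  · rintro _ ⟨⟨q, rfl⟩, hq1, hq2⟩
    simp only [Metric.mem_ball, mem_Ioo] at hq1 hq2
    -- q.2 ≥ 0
    have hq2' : 0 ≤ q.2 := by
      by_contra hneg'
      push_neg at hneg'
      have hfq : f q = 1 / q.2 := hfneg q hneg'
      have h1 : |q.2 - p.2| < ρ := (dist_coords hq1).2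
      have h2 : -1 < q.2 := by
        have := (abs_lt.mp h1).1
        linarith
      have h3 : 1 / q.2 < -1 := by
        rw [div_lt_iff_of_neg hneg']
        nlinarith
      rw [hfq] at hq2
      linarith [hq2.1]
    have hqd : ∀ n : ℕ, 1 ≤ n → q ∉ exDisc n := by
      intro n hn hmem
      have := f_ge_disc f hfB hn hmem
      linarith [hq2.2]
    have hqN : q ∈ N := hcov q hq1 hq2' hqd
    exact ⟨q, hqN, by simp [hf0 q hq2' hqd]⟩


end pieces

section main
variable (f : ℝ × ℝ → ℝ)

lemma convex_upper_half : Convex ℝ {q : ℝ × ℝ | 0 ≤ q.2} := by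
  intro x hx y hy a b ha hb hab
  simp only [mem_setOf_eq, Prod.snd_add, Prod.smul_snd, smul_eq_mul] at *
  exact add_nonneg (mul_nonneg ha hx) (mul_nonneg hb hy)

lemma key (hf0 : ∀ p : ℝ × ℝ, 0 ≤ p.2 → (∀ n : ℕ, 1 ≤ n → p ∉ exDisc n) → f p = 0)
    (hfneg : ∀ p : ℝ × ℝ, p.2 < 0 → f p = 1 / p.2)
    (hfB : ∀ n : ℕ, 1 ≤ n → ∀ p ∈ exDisc n,
      f p = n + Real.tan (π / (2 * exRadius n) *
        Real.sqrt (p.1 ^ 2 + (p.2 - 1 / n) ^ 2)))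
    (p : ℝ × ℝ) {ε : ℝ} (hε : 0 < ε) :
    ∃ V O : Set ((ℝ × ℝ) × ℝ), IsPreconnected V ∧ V ⊆ range (fun q => (q, f q)) ∧
      V ⊆ Metric.ball (p, f p) ε ∧ IsOpen O ∧ (p, f p) ∈ O ∧
      range (fun q => (q, f q)) ∩ O ⊆ V := by
  rcases lt_or_ge p.2 0 with hneg | hpos
  · have hCA : ContinuousAt (fun q : ℝ × ℝ => (q, f q)) p :=
      continuousAt_id.prodMk (f_contAt_neg f hfneg hneg)
    have hpre : (fun q : ℝ × ℝ => (q, f q)) ⁻¹' Metric.ball (p, f p) ε ∈ 𝓝 p :=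
      hCA.preimage_mem_nhds (Metric.ball_mem_nhds _ hε)
    obtain ⟨δ, hδ, hδsub⟩ := Metric.mem_nhds_iff.mp hpre
    refine graph_piece f (s := Metric.ball p δ ∩ {q : ℝ × ℝ | q.2 < 0}) ?_ ?_ ?_ ?_ ?_
    · exact Metric.isOpen_ball.inter (isOpen_lt continuous_snd continuous_const)
    · exact ((convex_ball p δ).inter convex_neg_half).isPreconnected
    · intro q hq; exact (f_contAt_neg f hfneg hq.2).continuousWithinAt
    · exact ⟨Metric.mem_ball_self hδ, hneg⟩
    · intro q hq; exact hδsub hq.1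
  · by_cases hdisc : ∃ n, 1 ≤ n ∧ p ∈ exDisc n
    · obtain ⟨n, hn, hpn⟩ := hdisc
      have hCA : ContinuousAt (fun q : ℝ × ℝ => (q, f q)) p :=
        continuousAt_id.prodMk (f_contAt_disc f hfB hn hpn)
      have hpre : (fun q : ℝ × ℝ => (q, f q)) ⁻¹' Metric.ball (p, f p) ε ∈ 𝓝 p :=
        hCA.preimage_mem_nhds (Metric.ball_mem_nhds _ hε)
      obtain ⟨δ, hδ, hδsub⟩ := Metric.mem_nhds_iff.mp hpre
      refine graph_piece f (s := exDisc n ∩ Metric.ball p δ) ?_ ?_ ?_ ?_ ?_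
      · exact (isOpen_exDisc n).inter Metric.isOpen_ball
      · exact ((convex_exDisc hn).inter (convex_ball p δ)).isPreconnected
      · intro q hq; exact (f_contAt_disc f hfB hn hq.1).continuousWithinAt
      · exact ⟨hpn, Metric.mem_ball_self hδ⟩
      · intro q hq; exact hδsub hq.2
    · push_neg at hdisc
      have hnotin : ∀ n : ℕ, 1 ≤ n → p ∉ exDisc n := fun n hn => hdisc n hn
      have hdata : ∃ (N : Set (ℝ × ℝ)) (ρ : ℝ), 0 < ρ ∧ ρ ≤ 1 ∧ IsPreconnected N ∧
          (∀ q ∈ N, 0 ≤ q.2 ∧ ∀ m : ℕ, 1 ≤ m → q ∉ exDisc m) ∧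
          (∀ q ∈ N, dist q p < ε) ∧
          (∀ q : ℝ × ℝ, dist q p < ρ → 0 ≤ q.2 →
            (∀ m : ℕ, 1 ≤ m → q ∉ exDisc m) → q ∈ N) := by
        by_cases h0 : p = 0
        · subst h0
          set δ := min ε 1 with hδdef
          have hδ0 : 0 < δ := lt_min hε one_pos
          have hδ1 : δ ≤ 1 := min_le_right _ _
          have hδε : δ ≤ ε := min_le_left _ _
          refine ⟨originNbhd δ, δ, hδ0, hδ1, origin_preconnected hδ0 hδ1, ?_, ?_, ?_⟩
          · rintro q ⟨hq1, hq2, hq3, hq4⟩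
            exact ⟨hq2, hq4⟩
          · rintro q ⟨hq1, hq2, hq3, hq4⟩
            apply dist_coords'
            · simpa using lt_of_lt_of_le hq1 hδε
            · simp only [Prod.snd_zero, sub_zero]
              rw [abs_of_nonneg hq2]
              exact lt_of_lt_of_le hq3 hδε
          · intro q hq hq2 hqd
            obtain ⟨h1, h2⟩ := dist_coords hq
            simp only [Prod.fst_zero, Prod.snd_zero, sub_zero] at h1 h2
            refine ⟨h1, hq2, ?_, hqd⟩
            rw [abs_of_nonneg hq2] at h2
            exact h2
        · by_cases hbdry : ∃ n, 1 ≤ n ∧ p.1 ^ 2 + (p.2 - 1 / n) ^ 2 = (exRadius n) ^ 2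
          · obtain ⟨n, hn, hc⟩ := hbdry
            exact boundary_nbhd hn hc hnotin hε
          · push_neg at hbdry
            have hstrict : ∀ m : ℕ, 1 ≤ m → (exRadius m) ^ 2 < p.1 ^ 2 + (p.2 - 1 / m) ^ 2 := by
              intro m hm
              have h1 : ¬ (p.1 ^ 2 + (p.2 - 1 / m) ^ 2 < (exRadius m) ^ 2) := by
                intro h
                exact hnotin m hm ((mem_exDisc_iff hm).mpr h)
              have h2 := hbdry m hm
              rcases lt_trichotomy (p.1 ^ 2 + (p.2 - 1 / m) ^ 2) ((exRadius m) ^ 2) with h | h | h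
              · exact absurd h h1
              · exact absurd h h2
              · exact h
            have hfarex : ∃ ε₀ > 0, ∀ q : ℝ × ℝ, |q.1 - p.1| < ε₀ → |q.2 - p.2| < ε₀ →
                ∀ m : ℕ, 1 ≤ m → q ∉ exDisc m := by
              rcases eq_or_lt_of_le hpos with h2 | h2
              · have hp1 : p.1 ≠ 0 := by
                  intro h
                  apply h0
                  exact Prod.ext h h2.symm
                exact far_discs_axis hp1 h2.symm
              · obtain ⟨ε₀, hε₀, hfar⟩ := far_discs h2 0
                  (fun m hm _ => hstrict m hm)
                exact ⟨ε₀, hε₀, fun q h1 h2' m hm => hfar q h1 h2' m hm (by omega)⟩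
            obtain ⟨ε₀, hε₀, hfar⟩ := hfarex
            set δ := min ε (min 1 ε₀) with hδdef
            have hδ0 : 0 < δ := lt_min hε (lt_min one_pos hε₀)
            have hδ1 : δ ≤ 1 := le_trans (min_le_right _ _) (min_le_left _ _)
            have hδε : δ ≤ ε := min_le_left _ _
            have hδε₀ : δ ≤ ε₀ := le_trans (min_le_right _ _) (min_le_right _ _)
            refine ⟨Metric.ball p δ ∩ {q : ℝ × ℝ | 0 ≤ q.2}, δ, hδ0, hδ1,
              ((convex_ball p δ).inter convex_upper_half).isPreconnected, ?_, ?_, ?_⟩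
            · rintro q ⟨hq1, hq2⟩
              rw [Metric.mem_ball] at hq1
              obtain ⟨h1, h2⟩ := dist_coords hq1
              exact ⟨hq2, fun m hm => hfar q (lt_of_lt_of_le h1 hδε₀) (lt_of_lt_of_le h2 hδε₀) m hm⟩
            · rintro q ⟨hq1, hq2⟩
              rw [Metric.mem_ball] at hq1
              exact lt_of_lt_of_le hq1 hδε
            · intro q hq hq2 hqd
              exact ⟨Metric.mem_ball.mpr hq, hq2⟩
      obtain ⟨N, ρ, h1, h2, h3, h4, h5, h6⟩ := hdata
      exact flat_piece f hf0 hfneg hfB hpos hnotin hε h1 h2 h3 h4 h5 h6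

end main

/-- The graph of the example function `f` is locally connected as a
subspace of `ℝ² × ℝ`. -/
theorem stmt10 (f : ℝ × ℝ → ℝ)
    (hf0 : ∀ p : ℝ × ℝ, 0 ≤ p.2 → (∀ n : ℕ, 1 ≤ n → p ∉ exDisc n) → f p = 0)
    (hfneg : ∀ p : ℝ × ℝ, p.2 < 0 → f p = 1 / p.2)
    (hfB : ∀ n : ℕ, 1 ≤ n → ∀ p ∈ exDisc n,
      f p = n + Real.tan (π / (2 * exRadius n) *
        Real.sqrt (p.1 ^ 2 + (p.2 - 1 / n) ^ 2)))
    : LocallyConnectedSpace (Set.range fun p => (p, f p)) := by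
  set G : Set ((ℝ × ℝ) × ℝ) := Set.range fun p => (p, f p) with hG
  rw [locallyConnectedSpace_iff_connected_subsets]
  rintro ⟨x, hx⟩ U hU
  obtain ⟨q, rfl⟩ := hx
  rw [mem_nhds_subtype] at hU
  obtain ⟨W, hW, hWU⟩ := hU
  obtain ⟨ε, hε, hball⟩ := Metric.mem_nhds_iff.mp hW
  obtain ⟨V, O, hVpre, hVG, hVball, hO, hpO, hcov⟩ := key f hf0 hfneg hfB q hε
  refine ⟨Subtype.val ⁻¹' V, ?_, ?_, ?_⟩
  · rw [mem_nhds_subtype]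
    exact ⟨O, hO.mem_nhds hpO, fun z hz => hcov ⟨z.2, hz⟩⟩
  · rw [← IsInducing.subtypeVal.isPreconnected_image]
    have himg : Subtype.val '' (Subtype.val ⁻¹' V : Set G) = V := by
      rw [Subtype.image_preimage_coe]
      exact inter_eq_self_of_subset_right hVG
    rwa [himg]
  · intro z hz
    exact hWU (hball (hVball hz))
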